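/- Let D be a preferential-attachment degree process started at time t₀. Let δ and t be real numbers with 0 < δ ≤ 1/e², t ≥ 2/δ² and ⌊t⌋ ≥ t₀. Then for every natural number d with ℙ[D(⌊t⌋) = d] > 0, the conditional probability ℙ[ D(⌊(1+δ)t⌋) ≥ (1 + δ/2 + 2δ²)·d | D(⌊t⌋) = d ] is at most ln(2·e·t)·exp(−δ³·d/8). -/

import Mathlib

open MeasureTheory ProbabilityTheory Real

structure PAProcess {Ω : Type*} [m0 : MeasurableSpace Ω] (μ : Measure Ω)
    (ℱ : Filtration ℕ m0) (t₀ : ℕ) where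
  D : ℕ → Ω → ℕ
  adapted : ∀ s : ℕ, Measurable[ℱ s] (D s)
  init : ∀ᵐ ω ∂μ, 1 ≤ D t₀ ω ∧ D t₀ ω ≤ 2 * t₀
  incr : ∀ s : ℕ, t₀ < s → ∀ᵐ ω ∂μ, D s ω = D (s - 1) ω ∨ D s ω = D (s - 1) ω + 1
  cond : ∀ s : ℕ, t₀ < s →
      μ[Set.indicator {ω' | D s ω' = D (s - 1) ω' + 1} (fun _ => (1 : ℝ)) | ℱ (s - 1)]
        =ᵐ[μ] fun ω => (D (s - 1) ω : ℝ) / (2 * s - 1)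

/-!
Exponential Markov inequality for a truncated exponential of the degree. Put `θ = 1 + δ`,
`T = ⌊t⌋`, `A = {D T = d}` and `K = ⌈(1 + δ/2 + 2δ²) d⌉`. While `D < K` the degree grows at
rate at most `(K - 1)/(2s - 1)`, and once `D ≥ K` the function `θ ^ min D K` is frozen, so
`∫_A θ ^ min (D s) K` grows by a factor at most `1 + δ (K - 1)/(2T + 1)` per step. Over the
roughly `δ t` steps up to `⌊(1 + δ) t⌋` this gives
`θ^K ℙ[A ∩ {D ≥ K}] ≤ exp (δ² K / 2 + O(δ³ K)) θ^d ℙ[A]`, while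
`θ^(K - d) ≥ exp ((K - d) δ (1 - δ))` with `K - d ≈ (δ/2 + 2δ²) d`, leaving a margin of at least
`exp (δ³ d / 8)`.
-/

lemma exp_mul_one_sub_le_one_add {δ : ℝ} (hδ : 0 ≤ δ) : exp (δ * (1 - δ)) ≤ 1 + δ := by
  rw [← le_log_iff_exp_le (by linarith)]
  calc δ * (1 - δ) ≤ 1 - (1 + δ)⁻¹ := by
        rw [le_sub_iff_add_le, ← le_sub_iff_add_le', inv_le_iff_one_le_mul₀ (by linarith)]
        nlinarith [mul_nonneg hδ (sq_nonneg δ)]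
    _ ≤ log (1 + δ) := one_sub_inv_le_log_of_pos (by linarith)

lemma one_add_mul_pow_mul_le {δ p E : ℝ} (hδ : 0 ≤ δ) (hp : 0 ≤ p) {n d K : ℕ} (hdK : d ≤ K)
    (h : n * (p * δ) ≤ E + (K - d) * (δ * (1 - δ))) :
    (1 + p * δ) ^ n * (1 + δ) ^ d ≤ exp E * (1 + δ) ^ K := by
  calc (1 + p * δ) ^ n * (1 + δ) ^ d ≤ exp (p * δ) ^ n * (1 + δ) ^ d := by
        gcongr
        linarith [add_one_le_exp (p * δ)]
    _ = exp (n * (p * δ)) * (1 + δ) ^ d := by rw [exp_nat_mul]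
    _ ≤ exp (E + (K - d : ℕ) * (δ * (1 - δ))) * (1 + δ) ^ d := by
        rw [Nat.cast_sub hdK]; gcongr
    _ = exp E * exp (δ * (1 - δ)) ^ (K - d) * (1 + δ) ^ d := by rw [exp_add, exp_nat_mul]
    _ ≤ exp E * (1 + δ) ^ (K - d) * (1 + δ) ^ d := by
        gcongr; exact exp_mul_one_sub_le_one_add hδ
    _ = exp E * (1 + δ) ^ K := by rw [mul_assoc, ← pow_add, Nat.sub_add_cancel hdK]

lemma cond_toReal_le_of_measureReal_inter_le {Ω : Type*} [MeasurableSpace Ω] {μ : Measure Ω}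
    {A B : Set Ω} (hA : MeasurableSet A) {c : ℝ} (hc : 0 ≤ c)
    (h : μ.real (A ∩ B) ≤ c * μ.real A) : (μ[B|A]).toReal ≤ c := by
  rw [cond_apply hA, ENNReal.toReal_mul, ENNReal.toReal_inv, ← measureReal_def, ← measureReal_def]
  calc (μ.real A)⁻¹ * μ.real (A ∩ B) ≤ (μ.real A)⁻¹ * (c * μ.real A) := by gcongr
    _ = c * ((μ.real A)⁻¹ * μ.real A) := by ring
    _ ≤ c := mul_le_of_le_one_right hc (inv_mul_le_one_of_le₀ le_rfl measureReal_nonneg)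

lemma chernoff_exponent_le {δ t d K n T : ℝ} (hδ0 : 0 < δ) (hδ : δ ≤ 1 / 7) (ht : 2 ≤ δ ^ 2 * t)
    (hd : 1 ≤ d) (hK : (1 + δ / 2 + 2 * δ ^ 2) * d ≤ K) (hn : n ≤ δ * t + 1) (hT : t - 1 ≤ T) :
    n * ((K - 1) / (2 * T + 1) * δ) ≤ -(δ ^ 3 * d) / 8 + (K - d) * (δ * (1 - δ)) := by
  have ht0 : 0 < t := pos_of_mul_pos_right (by linarith : 0 < δ ^ 2 * t) (by positivity)
  have ht98 : 98 ≤ t := by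
    nlinarith [mul_le_mul_of_nonneg_right (pow_le_pow_left₀ hδ0.le hδ 2) ht0.le]
  have h2t : 0 < 2 * t - 1 := by linarith
  have hK1 : 1 ≤ K := by nlinarith
  have hrate : (K - 1) / (2 * T + 1) ≤ (K - 1) / (2 * t - 1) :=
    div_le_div_of_nonneg_left (by linarith) h2t (by linarith)
  calc n * ((K - 1) / (2 * T + 1) * δ) ≤ (δ * t + 1) * ((K - 1) / (2 * t - 1) * δ) :=
        mul_le_mul hn (by gcongr) (mul_nonneg (div_nonneg (by linarith) (by linarith)) hδ0.le)
          (by linarith [mul_pos hδ0 ht0])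
    _ ≤ -(δ ^ 3 * d) / 8 + (K - d) * (δ * (1 - δ)) := by
        rw [← mul_assoc, mul_div_assoc', div_mul_eq_mul_div, div_le_iff₀ h2t]
        have hδt : 2 / δ ≤ δ * t := by rw [div_le_iff₀ hδ0]; nlinarith
        have h14 : 14 ≤ δ * t := le_trans (by rw [le_div_iff₀ hδ0]; linarith) hδt
        have hd_coef : (δ * t + 1) * (1 + δ / 2 + 2 * δ ^ 2)
            ≤ (-(δ ^ 2) / 8 + (δ / 2 + 2 * δ ^ 2) * (1 - δ)) * (2 * t - 1) := by
          nlinarith [mul_le_mul_of_nonneg_right hδ (by linarith : 0 ≤ δ ^ 2 * t), mul_pos hδ0 hδ0]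
        -- raising `K` above `(1 + δ/2 + 2δ²) d` costs `≈ δ/2` per unit and gains `δ (1 - δ)`
        have hexcess : 0 ≤ (δ * (1 - δ) * (2 * t - 1) - (δ * t + 1) * δ)
            * (K - (1 + δ / 2 + 2 * δ ^ 2) * d) := by
          apply mul_nonneg _ (by linarith)
          nlinarith
        nlinarith [mul_le_mul_of_nonneg_left hd_coef (by positivity : 0 ≤ δ * d),
          mul_pos (by positivity : 0 < δ * t + 1) hδ0]

namespace PAProcess

noncomputable def transitionOp (s : ℕ) (φ : ℕ → ℝ) (k : ℕ) : ℝ :=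
  φ k + (φ (k + 1) - φ k) * (k / (2 * s - 1))

lemma transitionOp_pow_min_le {θ p : ℝ} (hθ : 1 ≤ θ) (hp0 : 0 ≤ p) {s K : ℕ} (hs : 1 ≤ s)
    (hp : (K - 1 : ℝ) / (2 * s - 1) ≤ p) (k : ℕ) :
    transitionOp s (fun j => θ ^ min j K) k ≤ (1 + p * (θ - 1)) * θ ^ min k K := by
  have hθ1 : 0 ≤ θ - 1 := by linarith
  have hs' : (0 : ℝ) < 2 * s - 1 := by
    have : (1 : ℝ) ≤ s := by exact_mod_cast hs
    linarith
  simp only [transitionOp]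
  rcases lt_or_ge k K with hk | hk
  · have hkK : (k : ℝ) ≤ K - 1 := by
      rw [le_sub_iff_add_le]; exact_mod_cast hk
    have hrate : (k : ℝ) / (2 * s - 1) ≤ p := le_trans (by gcongr) hp
    rw [min_eq_left hk.le, min_eq_left (by omega : k + 1 ≤ K), pow_succ]
    nlinarith [mul_le_mul_of_nonneg_left hrate (mul_nonneg (pow_nonneg (by linarith : (0 : ℝ) ≤ θ) k) hθ1)]
  · rw [min_eq_right hk, min_eq_right (by omega : K ≤ k + 1), sub_self, zero_mul, add_zero]
    nlinarith [mul_nonneg (mul_nonneg hp0 hθ1) (pow_nonneg (by linarith : (0 : ℝ) ≤ θ) K)]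

variable {Ω : Type*} [m0 : MeasurableSpace Ω] {μ : Measure Ω} {ℱ : Filtration ℕ m0} {t₀ : ℕ}
  (P : PAProcess μ ℱ t₀)

lemma measurable_D (s : ℕ) : Measurable (P.D s) := (P.adapted s).mono (ℱ.le s) le_rfl

variable [IsFiniteMeasure μ] {φ : ℕ → ℝ} {C : ℝ}

lemma integrable_comp_D (hφ : ∀ k, |φ k| ≤ C) (s : ℕ) : Integrable (fun ω => φ (P.D s ω)) μ :=
  .of_bound (measurable_from_nat.comp (P.measurable_D s)).aestronglyMeasurable C
    (ae_of_all _ fun _ => hφ _)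

lemma condExp_comp_D_ae_eq {s : ℕ} (hs : t₀ < s) (hφ : ∀ k, |φ k| ≤ C) :
    μ[fun ω => φ (P.D s ω) | ℱ (s - 1)] =ᵐ[μ] fun ω => transitionOp s φ (P.D (s - 1) ω) := by
  set inc := {ω | P.D s ω = P.D (s - 1) ω + 1}
  have hinc : MeasurableSet inc :=
    measurableSet_eq_fun (P.measurable_D s) ((P.measurable_D (s - 1)).add_const 1)
  set Δ : Ω → ℝ := fun ω => φ (P.D (s - 1) ω + 1) - φ (P.D (s - 1) ω)
  have hΔ : StronglyMeasurable[ℱ (s - 1)] Δ :=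
    ((measurable_from_nat (f := fun k => φ (k + 1))).comp (P.adapted (s - 1))).sub
      (measurable_from_nat.comp (P.adapted (s - 1))) |>.stronglyMeasurable
  have hφD : StronglyMeasurable[ℱ (s - 1)] fun ω => φ (P.D (s - 1) ω) :=
    (measurable_from_nat.comp (P.adapted (s - 1))).stronglyMeasurable
  have h1 : Integrable (inc.indicator fun _ => (1 : ℝ)) μ := (integrable_const 1).indicator hinc
  have hΔ1 : Integrable (Δ * inc.indicator fun _ => (1 : ℝ)) μ :=
    ((P.integrable_comp_D (fun k => hφ (k + 1)) _).sub (P.integrable_comp_D hφ _)).mul_bdd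
      h1.aestronglyMeasurable (c := 1) (ae_of_all _ fun ω => by
        by_cases h : ω ∈ inc <;> simp [h])
  have hsplit : (fun ω => φ (P.D s ω)) =ᵐ[μ]
      (fun ω => φ (P.D (s - 1) ω)) + Δ * inc.indicator fun _ => 1 := by
    filter_upwards [P.incr s hs] with ω h
    rcases h with h | h <;> simp [inc, Δ, h]
  calc μ[fun ω => φ (P.D s ω) | ℱ (s - 1)]
      =ᵐ[μ] μ[fun ω => φ (P.D (s - 1) ω) | ℱ (s - 1)]
        + μ[Δ * inc.indicator fun _ => 1 | ℱ (s - 1)] :=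
        (condExp_congr_ae hsplit).trans (condExp_add (P.integrable_comp_D hφ _) hΔ1 _)
    _ =ᵐ[μ] (fun ω => φ (P.D (s - 1) ω)) + Δ * μ[inc.indicator fun _ => 1 | ℱ (s - 1)] := by
        rw [condExp_of_stronglyMeasurable (ℱ.le _) hφD (P.integrable_comp_D hφ _)]
        exact (condExp_mul_of_stronglyMeasurable_left hΔ hΔ1 h1).add_left
    _ =ᵐ[μ] fun ω => transitionOp s φ (P.D (s - 1) ω) := by
        filter_upwards [P.cond s hs] with ω h
        simp [transitionOp, Δ, inc, h]

lemma setIntegral_comp_D_le {s : ℕ} (hs : t₀ < s) {A : Set Ω} (hA : MeasurableSet[ℱ (s - 1)] A)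
    (hφ : ∀ k, |φ k| ≤ C) {ρ : ℝ} (hρ : ∀ k, transitionOp s φ k ≤ ρ * φ k) :
    ∫ ω in A, φ (P.D s ω) ∂μ ≤ ρ * ∫ ω in A, φ (P.D (s - 1) ω) ∂μ := by
  rw [← setIntegral_condExp (ℱ.le _) (P.integrable_comp_D hφ s) hA, ← integral_const_mul]
  refine setIntegral_mono_ae_restrict integrable_condExp.integrableOn
    ((P.integrable_comp_D hφ _).const_mul ρ).integrableOn ?_
  filter_upwards [ae_restrict_of_ae (P.condExp_comp_D_ae_eq hs hφ)] with ω h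
  exact h.trans_le (hρ _)

lemma setIntegral_comp_D_add_le {T : ℕ} (hT : t₀ ≤ T) {A : Set Ω} (hA : MeasurableSet[ℱ T] A)
    (hφ : ∀ k, |φ k| ≤ C) {ρ : ℝ} (hρ0 : 0 ≤ ρ)
    (hρ : ∀ s, T < s → ∀ k, transitionOp s φ k ≤ ρ * φ k) (n : ℕ) :
    ∫ ω in A, φ (P.D (T + n) ω) ∂μ ≤ ρ ^ n * ∫ ω in A, φ (P.D T ω) ∂μ := by
  induction n with
  | zero => simp
  | succ n ih =>
    have hstep := P.setIntegral_comp_D_le (s := T + n + 1) (by omega)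
      (ℱ.mono (by omega) _ hA) hφ (hρ _ (by omega))
    rw [Nat.add_sub_cancel] at hstep
    calc _ ≤ ρ * ∫ ω in A, φ (P.D (T + n) ω) ∂μ := hstep
      _ ≤ ρ * (ρ ^ n * ∫ ω in A, φ (P.D T ω) ∂μ) := by gcongr
      _ = ρ ^ (n + 1) * ∫ ω in A, φ (P.D T ω) ∂μ := by ring

lemma pow_mul_measureReal_inter_le {T : ℕ} (hT : t₀ ≤ T) {A : Set Ω} (hA : MeasurableSet[ℱ T] A)
    {d K : ℕ} (hdK : d ≤ K) (hAd : ∀ ω ∈ A, P.D T ω = d) {θ p : ℝ} (hθ : 1 ≤ θ) (hp0 : 0 ≤ p)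
    (hp : ∀ s : ℕ, T < s → (K - 1 : ℝ) / (2 * s - 1) ≤ p) (n : ℕ) :
    θ ^ K * μ.real (A ∩ {ω | K ≤ P.D (T + n) ω}) ≤ (1 + p * (θ - 1)) ^ n * θ ^ d * μ.real A := by
  set φ : ℕ → ℝ := fun k => θ ^ min k K
  have hφ0 : ∀ k, 0 ≤ φ k := fun k => pow_nonneg (by linarith) _
  have hφ : ∀ k, |φ k| ≤ θ ^ K := fun k =>
    (abs_of_nonneg (hφ0 k)).trans_le (pow_le_pow_right₀ hθ (min_le_right _ _))
  have hAm : MeasurableSet A := ℱ.le T A hA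
  calc θ ^ K * μ.real (A ∩ {ω | K ≤ P.D (T + n) ω})
      ≤ θ ^ K * (μ.restrict A).real {ω | θ ^ K ≤ φ (P.D (T + n) ω)} := by
        rw [measureReal_restrict_apply' hAm, Set.inter_comm]
        refine mul_le_mul_of_nonneg_left (measureReal_mono fun ω hω => ⟨?_, hω.2⟩) (by positivity)
        simp [φ, min_eq_right hω.1.out]
    _ ≤ ∫ ω in A, φ (P.D (T + n) ω) ∂μ :=
        mul_meas_ge_le_integral_of_nonneg (ae_of_all _ fun _ => hφ0 _)
          (P.integrable_comp_D hφ _).integrableOn _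
    _ ≤ (1 + p * (θ - 1)) ^ n * ∫ ω in A, φ (P.D T ω) ∂μ :=
        P.setIntegral_comp_D_add_le hT hA hφ (add_nonneg zero_le_one (mul_nonneg hp0 (by linarith)))
          (fun s hs => transitionOp_pow_min_le hθ hp0 (by omega) (hp s hs)) n
    _ = (1 + p * (θ - 1)) ^ n * θ ^ d * μ.real A := by
        rw [setIntegral_congr_fun (g := fun _ => θ ^ d) hAm
            (fun ω hω => by simp [φ, hAd ω hω, min_eq_left hdK]), setIntegral_const, smul_eq_mul]
        ring

lemma measureReal_degree_growth_le {δ t : ℝ} (hδ0 : 0 < δ) (hδ : δ ≤ 1 / 7) (ht : 2 ≤ δ ^ 2 * t)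
    (ht₀ : t₀ ≤ ⌊t⌋₊) {d : ℕ} (hd : 1 ≤ d) :
    μ.real ({ω | P.D ⌊t⌋₊ ω = d} ∩
        {ω | (1 + δ / 2 + 2 * δ ^ 2) * d ≤ (P.D ⌊(1 + δ) * t⌋₊ ω : ℝ)})
      ≤ exp (-(δ ^ 3 * d) / 8) * μ.real {ω | P.D ⌊t⌋₊ ω = d} := by
  set T := ⌊t⌋₊
  set K := ⌈(1 + δ / 2 + 2 * δ ^ 2) * d⌉₊
  set p : ℝ := (K - 1) / (2 * T + 1)
  have ht0 : 0 < t := pos_of_mul_pos_right (by linarith : 0 < δ ^ 2 * t) (by positivity)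
  obtain ⟨n, hn⟩ := Nat.exists_eq_add_of_le (Nat.floor_mono (by nlinarith) : T ≤ ⌊(1 + δ) * t⌋₊)
  have hK : (1 + δ / 2 + 2 * δ ^ 2) * d ≤ K := Nat.le_ceil _
  have hdK : d ≤ K := by
    have : (d : ℝ) ≤ K := le_trans (by nlinarith [(Nat.one_le_cast (α := ℝ)).mpr hd]) hK
    exact_mod_cast this
  have hK1 : (0 : ℝ) ≤ K - 1 := sub_nonneg.mpr (Nat.one_le_cast.mpr (hd.trans hdK))
  have hp0 : 0 ≤ p := div_nonneg hK1 (by positivity)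
  have hp : ∀ s : ℕ, T < s → (K - 1 : ℝ) / (2 * s - 1) ≤ p := fun s hs => by
    have : (T : ℝ) + 1 ≤ s := by exact_mod_cast hs
    exact div_le_div_of_nonneg_left hK1 (by positivity) (by linarith)
  have hTt : t - 1 ≤ T := (Nat.sub_one_lt_floor t).le
  have hnt : (n : ℝ) ≤ δ * t + 1 := by
    have : ((T + n : ℕ) : ℝ) ≤ (1 + δ) * t := hn ▸ Nat.floor_le (by positivity)
    push_cast at this
    linarith
  have hexp := one_add_mul_pow_mul_le hδ0.le hp0 hdK
    (chernoff_exponent_le hδ0 hδ ht (Nat.one_le_cast.mpr hd) hK hnt hTt)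
  have hchern := P.pow_mul_measureReal_inter_le ht₀ (P.adapted T (measurableSet_singleton d)) hdK
    (fun _ hω => hω) (θ := 1 + δ) (by linarith) hp0 hp n
  rw [← hn, add_sub_cancel_left] at hchern
  refine le_of_mul_le_mul_left ?_ (pow_pos (by linarith : (0 : ℝ) < 1 + δ) K)
  calc (1 + δ) ^ K * μ.real ({ω | P.D T ω = d} ∩
        {ω | (1 + δ / 2 + 2 * δ ^ 2) * d ≤ (P.D ⌊(1 + δ) * t⌋₊ ω : ℝ)})
      ≤ (1 + δ) ^ K * μ.real ({ω | P.D T ω = d} ∩ {ω | K ≤ P.D ⌊(1 + δ) * t⌋₊ ω}) := by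
        refine mul_le_mul_of_nonneg_left (measureReal_mono ?_) (by positivity)
        exact Set.inter_subset_inter_right _ fun _ hω => Nat.ceil_le.mpr hω
    _ ≤ (1 + p * δ) ^ n * (1 + δ) ^ d * μ.real {ω | P.D T ω = d} := hchern
    _ ≤ exp (-(δ ^ 3 * d) / 8) * (1 + δ) ^ K * μ.real {ω | P.D T ω = d} := by gcongr
    _ = (1 + δ) ^ K * (exp (-(δ ^ 3 * d) / 8) * μ.real {ω | P.D T ω = d}) := by ring

end PAProcess

theorem short_term_upper_bound_general
    {Ω : Type*} [m0 : MeasurableSpace Ω] (μ : Measure Ω) [IsProbabilityMeasure μ]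
    (ℱ : Filtration ℕ m0) (t₀ : ℕ)
    (P : PAProcess μ ℱ t₀)
    (δ t : ℝ) (hδ0 : 0 < δ) (hδ1 : δ ≤ 1 / Real.exp 1 ^ 2)
    (ht : 2 / δ ^ 2 ≤ t) (ht₀' : t₀ ≤ ⌊t⌋₊)
    (d : ℕ) :
    (μ[|{ω | P.D ⌊t⌋₊ ω = d}]
        {ω | (1 + δ / 2 + 2 * δ ^ 2) * d ≤ (P.D ⌊(1 + δ) * t⌋₊ ω : ℝ)}).toReal
      ≤ Real.log (2 * Real.exp 1 * t) * Real.exp (-(δ ^ 3 * d) / 8) := by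
  have hδ7 : δ ≤ 1 / 7 :=
    hδ1.trans (one_div_le_one_div_of_le (by norm_num) (by nlinarith [exp_one_gt_d9]))
  have ht2 : 2 ≤ δ ^ 2 * t := by rwa [div_le_iff₀ (by positivity), mul_comm] at ht
  have ht1 : 1 ≤ 2 * t := by
    nlinarith [mul_le_mul_of_nonneg_right (pow_le_pow_left₀ hδ0.le hδ7 2)
      ((div_pos two_pos (by positivity)).le.trans ht)]
  have hlog : 1 ≤ log (2 * exp 1 * t) := by
    rw [le_log_iff_exp_le (by nlinarith [exp_pos 1]), mul_right_comm]
    exact le_mul_of_one_le_left (exp_pos 1).le ht1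
  refine (cond_toReal_le_of_measureReal_inter_le (P.measurable_D _ (measurableSet_singleton d))
    (exp_pos _).le ?_).trans (le_mul_of_one_le_left (exp_pos _).le hlog)
  rcases Nat.eq_zero_or_pos d with rfl | hd
  · simp only [Nat.cast_zero, mul_zero, neg_zero, zero_div, exp_zero, one_mul]
    exact measureReal_mono Set.inter_subset_left
  · exact P.measureReal_degree_growth_le hδ0 hδ7 ht2 ht₀' hd

theorem short_term_upper_bound
    {Ω : Type*} [m0 : MeasurableSpace Ω] (μ : Measure Ω) [IsProbabilityMeasure μ]
    (ℱ : Filtration ℕ m0) (t₀ : ℕ) (ht₀ : 1 ≤ t₀)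
    (P : PAProcess μ ℱ t₀)
    (δ t : ℝ) (hδ0 : 0 < δ) (hδ1 : δ ≤ 1 / Real.exp 1 ^ 2)
    (ht : 2 / δ ^ 2 ≤ t) (ht₀' : t₀ ≤ ⌊t⌋₊)
    (d : ℕ) (hd : 0 < μ {ω | P.D ⌊t⌋₊ ω = d}) :
    (μ[|{ω | P.D ⌊t⌋₊ ω = d}]
        {ω | (1 + δ / 2 + 2 * δ ^ 2) * d ≤ (P.D ⌊(1 + δ) * t⌋₊ ω : ℝ)}).toReal
      ≤ Real.log (2 * Real.exp 1 * t) * Real.exp (-(δ ^ 3 * d) / 8) :=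
  short_term_upper_bound_general (m0 := m0) μ ℱ t₀ P δ t hδ0 hδ1 ht ht₀' d
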